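/- arXiv:0712.0837 — 4 statements merged into one kernel-verified Lean document; each statement's English description precedes it below -/
import Mathlib

section
/- For all positive integers k and m, Σ_{i=1}^{k−1} (−1)^{k−1−i} Σ_{d ∣ m} α_i(d) = α_k(m) + (−1)^k α_1(m), where the inner sum runs over all positive divisors d of m. -/
/-!
Splitting off the last factor gives `α_{k+1}(m) = ∑_{d ∣ m, d < m} α_k(d)`, that is
`∑_{d ∣ m} α_k(d) = α_{k+1}(m) + α_k(m)`; with these values the alternating sum telescopes.
-/

/-- `alpha k m` is the number of `k`-tuples `(m₁, …, m_k)` of integers, each `≥ 2`,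
whose product is `m`. -/
noncomputable def alpha (k m : ℕ) : ℕ :=
  Nat.card {f : Fin k → ℕ // (∀ i, 2 ≤ f i) ∧ ∏ i, f i = m}

open Finset

def factorTuples (k m : ℕ) : Finset (Fin k → ℕ) :=
  {f ∈ Nat.finMulAntidiag k m | ∀ i, 2 ≤ f i}

theorem mem_factorTuples {k m : ℕ} {f : Fin k → ℕ} :
    f ∈ factorTuples k m ↔ (∀ i, 2 ≤ f i) ∧ ∏ i, f i = m := by
  simp only [factorTuples, mem_filter, Nat.mem_finMulAntidiag]
  constructor
  · rintro ⟨⟨hprod, -⟩, h2⟩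
    exact ⟨h2, hprod⟩
  · rintro ⟨h2, rfl⟩
    exact ⟨⟨rfl, prod_ne_zero_iff.mpr fun i _ => by have := h2 i; omega⟩, h2⟩

theorem alpha_eq_card_factorTuples (k m : ℕ) : alpha k m = #(factorTuples k m) := by
  rw [alpha, ← Nat.card_eq_finsetCard]
  exact Nat.card_congr (Equiv.subtypeEquivRight fun _ => mem_factorTuples.symm)

theorem pos_of_mem_factorTuples {k m : ℕ} {f : Fin k → ℕ} (hf : f ∈ factorTuples k m) :
    0 < m := by
  obtain ⟨h2, rfl⟩ := mem_factorTuples.mp hf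
  exact prod_pos fun i _ => by have := h2 i; omega

theorem snoc_mem_factorTuples_iff {k m x : ℕ} {g : Fin k → ℕ} :
    (Fin.snoc g x : Fin (k + 1) → ℕ) ∈ factorTuples (k + 1) m ↔
      g ∈ factorTuples k (∏ i, g i) ∧ 2 ≤ x ∧ (∏ i, g i) * x = m := by
  simp [mem_factorTuples, Fin.forall_fin_succ', Fin.prod_snoc, and_assoc]

theorem card_factorTuples_succ (k m : ℕ) :
    #(factorTuples (k + 1) m) = ∑ d ∈ m.properDivisors, #(factorTuples k d) := by
  rw [← card_sigma]
  symm
  refine card_nbij' (fun p => Fin.snoc p.2 (m / p.1)) (fun f => ⟨∏ i, Fin.init f i, Fin.init f⟩)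
    ?_ ?_ ?_ ?_
  · rintro ⟨d, g⟩ hp
    simp only [coe_sigma, Set.mem_sigma_iff, mem_coe, Nat.mem_properDivisors] at hp
    obtain ⟨⟨⟨c, rfl⟩, hdc⟩, hg⟩ := hp
    obtain rfl := (mem_factorTuples.mp hg).2
    have hd := pos_of_mem_factorTuples hg
    rw [mem_coe, snoc_mem_factorTuples_iff, Nat.mul_div_cancel_left c hd]
    exact ⟨hg, by nlinarith, rfl⟩
  · intro f hf
    cases f using Fin.snocCases with | _ g x => ?_
    obtain ⟨hg, hx, rfl⟩ := snoc_mem_factorTuples_iff.mp hf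
    have hd := pos_of_mem_factorTuples hg
    simp only [coe_sigma, Set.mem_sigma_iff, mem_coe, Nat.mem_properDivisors, Fin.init_snoc]
    exact ⟨⟨dvd_mul_right _ _, by nlinarith⟩, hg⟩
  · rintro ⟨d, g⟩ hp
    simp only [coe_sigma, Set.mem_sigma_iff, mem_coe] at hp
    obtain rfl := (mem_factorTuples.mp hp.2).2
    simp only [Fin.init_snoc]
  · intro f hf
    cases f using Fin.snocCases with | _ g x => ?_
    obtain ⟨hg, -, rfl⟩ := snoc_mem_factorTuples_iff.mp hf
    simp only [Fin.init_snoc, Nat.mul_div_cancel_left x (pos_of_mem_factorTuples hg)]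

theorem alpha_succ (k m : ℕ) : alpha (k + 1) m = ∑ d ∈ m.properDivisors, alpha k d := by
  simp only [alpha_eq_card_factorTuples, card_factorTuples_succ]

theorem sum_divisors_alpha (k m : ℕ) :
    ∑ d ∈ m.divisors, alpha k d = alpha (k + 1) m + alpha k m := by
  rcases eq_or_ne m 0 with rfl | hm
  · simp [alpha_eq_card_factorTuples, factorTuples]
  · rw [← Nat.cons_self_properDivisors hm, sum_cons, alpha_succ, add_comm]

theorem sum_Ico_neg_one_pow_mul_add_succ {R : Type*} [CommRing R] (a : ℕ → R) {k : ℕ}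
    (hk : 1 ≤ k) :
    ∑ i ∈ Ico 1 k, (-1) ^ (k - 1 - i) * (a (i + 1) + a i) = a k + (-1) ^ k * a 1 := by
  induction k, hk using Nat.le_induction with
  | base => simp
  | succ k hk ih =>
    have hsign : ∀ i ∈ Ico 1 k, (-1 : R) ^ (k + 1 - 1 - i) = -(-1) ^ (k - 1 - i) := fun i hi => by
      rw [show k + 1 - 1 - i = k - 1 - i + 1 by grind, pow_succ, mul_neg_one]
    rw [sum_Ico_succ_top hk, sum_congr rfl fun i hi => by rw [hsign i hi, neg_mul],
      sum_neg_distrib, ih, add_tsub_cancel_right, Nat.sub_self, pow_zero, pow_succ]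
    ring

theorem stmt4_general (k m : ℕ) (hk : 0 < k) :
    ∑ i ∈ Finset.Ico 1 k, (-1 : ℤ) ^ (k - 1 - i) * ∑ d ∈ m.divisors, (alpha i d : ℤ)
      = (alpha k m : ℤ) + (-1 : ℤ) ^ k * (alpha 1 m : ℤ) := by
  simp_rw [← Nat.cast_sum, sum_divisors_alpha, Nat.cast_add]
  exact sum_Ico_neg_one_pow_mul_add_succ (fun i => (alpha i m : ℤ)) hk

theorem stmt4 (k m : ℕ) (hk : 0 < k) (hm : 0 < m) :
    ∑ i ∈ Finset.Ico 1 k, (-1 : ℤ) ^ (k - 1 - i) * ∑ d ∈ m.divisors, (alpha i d : ℤ)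
      = (alpha k m : ℤ) + (-1 : ℤ) ^ k * (alpha 1 m : ℤ) :=
  stmt4_general k m hk
end

section
/- There exists a real constant c with 1 < c < 2 such that α_k(m) ≤ m^c for all positive integers k and m. More precisely, this holds for any real c with Σ_{n=2}^∞ n^{-c} ≤ 1 (e.g. the real c ∈ (1,2) with ζ(c) = 2). -/
open Finset

lemma alpha_zero (m : ℕ) : alpha 0 m = if m = 1 then 1 else 0 := by
  split_ifs with h <;> simp [alpha, h, eq_comm]

lemma finite_factorizations (k : ℕ) {m : ℕ} (hm : 0 < m) :
    Finite {f : Fin k → ℕ // (∀ i, 2 ≤ f i) ∧ ∏ i, f i = m} := by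
  refine Set.Finite.to_subtype ((Set.Finite.pi' fun _ => Set.finite_Iic m).subset ?_)
  rintro f ⟨-, hf⟩ i
  exact Nat.le_of_dvd hm (hf ▸ dvd_prod_of_mem f (mem_univ i))

lemma head_mem_divisors_and_prod_tail {k m : ℕ} (hm : m ≠ 0) {f : Fin (k + 1) → ℕ}
    (hf : (∀ i, 2 ≤ f i) ∧ ∏ i, f i = m) :
    f 0 ∈ {d ∈ m.divisors | 2 ≤ d} ∧ (∀ i, 2 ≤ Fin.tail f i) ∧ ∏ i, Fin.tail f i = m / f 0 := by
  have hprod : f 0 * ∏ i, Fin.tail f i = m := by rw [← hf.2, Fin.prod_univ_succ]; rfl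
  refine ⟨?_, fun i => hf.1 i.succ, ?_⟩
  · simp only [mem_filter, Nat.mem_divisors]
    exact ⟨⟨Dvd.intro _ hprod, hm⟩, hf.1 0⟩
  · rw [← hprod, Nat.mul_div_cancel_left _ (by linarith [hf.1 0])]

lemma alpha_succ_le (k : ℕ) {m : ℕ} (hm : 0 < m) :
    alpha (k + 1) m ≤ ∑ d ∈ m.divisors with 2 ≤ d, alpha k (m / d) := by
  set S := {d ∈ m.divisors | 2 ≤ d}
  have fibre_finite (d : S) :
      Finite {f : Fin k → ℕ // (∀ i, 2 ≤ f i) ∧ ∏ i, f i = m / d} := by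
    obtain ⟨d, hd⟩ := d
    simp only [S, mem_filter, Nat.mem_divisors] at hd
    exact finite_factorizations k (Nat.div_pos (Nat.le_of_dvd hm hd.1.1) (by linarith [hd.2]))
  let split (f : {f : Fin (k + 1) → ℕ // (∀ i, 2 ≤ f i) ∧ ∏ i, f i = m}) :
      Σ d : S, {f : Fin k → ℕ // (∀ i, 2 ≤ f i) ∧ ∏ i, f i = m / d} :=
    have h := head_mem_divisors_and_prod_tail hm.ne' f.2
    ⟨⟨f.1 0, h.1⟩, Fin.tail f.1, h.2⟩
  have split_injective : Function.Injective split := by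
    refine Function.Injective.of_comp (f := fun x => ((x.1 : ℕ), (x.2 : Fin k → ℕ))) ?_
    exact (Fin.consEquiv fun _ => ℕ).symm.injective.comp Subtype.val_injective
  calc alpha (k + 1) m ≤ Nat.card (Σ d : S, _) :=
        Nat.card_le_card_of_injective split split_injective
    _ = ∑ d ∈ S, alpha k (m / d) := by rw [Nat.card_sigma, ← sum_coe_sort S]; rfl

lemma sum_rpow_neg_le_tsum {S : Finset ℕ} (hS : ∀ d ∈ S, 2 ≤ d) {c : ℝ}
    (hc : Summable fun n : ℕ => ((n + 2 : ℕ) : ℝ) ^ (-c)) :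
    ∑ d ∈ S, (d : ℝ) ^ (-c) ≤ ∑' n : ℕ, ((n + 2 : ℕ) : ℝ) ^ (-c) := by
  rw [← sum_preimage (· + 2) S (add_left_injective 2).injOn _
    fun d hd hrange => (hrange ⟨d - 2, by grind⟩).elim]
  exact hc.sum_le_tsum _ fun n _ => by positivity

lemma alpha_le_rpow {c : ℝ} (hc : Summable fun n : ℕ => ((n + 2 : ℕ) : ℝ) ^ (-c))
    (hc₁ : ∑' n : ℕ, ((n + 2 : ℕ) : ℝ) ^ (-c) ≤ 1) (k : ℕ) {m : ℕ} (hm : 0 < m) :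
    (alpha k m : ℝ) ≤ (m : ℝ) ^ c := by
  induction k generalizing m with
  | zero =>
    rw [alpha_zero]
    split_ifs with h
    · simp [h]
    · simpa using Real.rpow_nonneg m.cast_nonneg c
  | succ k ih =>
    set S := {d ∈ m.divisors | 2 ≤ d}
    have hS (d) (hd : d ∈ S) : d ∣ m ∧ 2 ≤ d := by
      simp only [S, mem_filter, Nat.mem_divisors] at hd
      exact ⟨hd.1.1, hd.2⟩
    calc (alpha (k + 1) m : ℝ)
        ≤ ∑ d ∈ S, (alpha k (m / d) : ℝ) := mod_cast alpha_succ_le k hm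
      _ ≤ ∑ d ∈ S, (m : ℝ) ^ c * (d : ℝ) ^ (-c) := by
          refine sum_le_sum fun d hd => ?_
          obtain ⟨hdm, hd2⟩ := hS d hd
          have hd0 : (d : ℝ) ≠ 0 := by norm_cast; omega
          calc (alpha k (m / d) : ℝ) ≤ ((m / d : ℕ) : ℝ) ^ c :=
                ih (Nat.div_pos (Nat.le_of_dvd hm hdm) (by omega))
            _ = (m : ℝ) ^ c * (d : ℝ) ^ (-c) := by
                rw [Nat.cast_div hdm hd0, Real.div_rpow (by positivity) (by positivity),
                  Real.rpow_neg (by positivity), div_eq_mul_inv]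
      _ = (m : ℝ) ^ c * ∑ d ∈ S, (d : ℝ) ^ (-c) := (mul_sum ..).symm
      _ ≤ (m : ℝ) ^ c :=
          mul_le_of_le_one_right (by positivity)
            ((sum_rpow_neg_le_tsum (fun d hd => (hS d hd).2) hc).trans hc₁)

lemma summable_rpow_neg_add_two {c : ℝ} (hc : 1 < c) :
    Summable fun n : ℕ => ((n + 2 : ℕ) : ℝ) ^ (-c) := by
  simpa using (summable_nat_add_iff 2).mpr (Real.summable_nat_rpow.mpr (by linarith : -c < -1))

lemma continuousOn_tsum_rpow_neg_add_two {a : ℝ} (ha : 1 < a) :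
    ContinuousOn (fun c : ℝ => ∑' n : ℕ, ((n + 2 : ℕ) : ℝ) ^ (-c)) (Set.Ici a) := by
  refine continuousOn_tsum (fun n => ?_) (summable_rpow_neg_add_two ha) fun n c hc => ?_
  · exact (continuous_const.rpow continuous_neg fun _ => Or.inl (by positivity)).continuousOn
  · rw [Real.norm_of_nonneg (by positivity)]
    exact Real.rpow_le_rpow_of_exponent_le (by norm_cast; omega) (neg_le_neg hc)

lemma tsum_rpow_neg_two_add_two_lt_one : ∑' n : ℕ, ((n + 2 : ℕ) : ℝ) ^ (-(2 : ℝ)) < 1 := by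
  have hsplit := hasSum_zeta_two.summable.sum_add_tsum_nat_add 2
  rw [hasSum_zeta_two.tsum_eq] at hsplit
  have hterm (n : ℕ) : ((n + 2 : ℕ) : ℝ) ^ (-(2 : ℝ)) = 1 / ((n + 2 : ℕ) : ℝ) ^ 2 := by
    rw [Real.rpow_neg (by positivity), one_div]; norm_cast
  simp only [tsum_congr hterm]
  norm_num [sum_range_succ] at hsplit ⊢
  nlinarith [Real.pi_lt_d2, Real.pi_gt_three]

open Filter Topology in
lemma exists_lt_two_tsum_rpow_neg_add_two_lt_one :
    ∃ c : ℝ, 1 < c ∧ c < 2 ∧ ∑' n : ℕ, ((n + 2 : ℕ) : ℝ) ^ (-c) < 1 := by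
  have hcont := (continuousOn_tsum_rpow_neg_add_two (a := 3 / 2) (by norm_num)).continuousAt
    (Ici_mem_nhds (by norm_num : (3 / 2 : ℝ) < 2))
  have hlt : ∀ᶠ c in 𝓝[<] (2 : ℝ), ∑' n : ℕ, ((n + 2 : ℕ) : ℝ) ^ (-c) < 1 :=
    eventually_nhdsWithin_of_eventually_nhds
      (hcont.eventually_lt continuousAt_const tsum_rpow_neg_two_add_two_lt_one)
  obtain ⟨c, hc, hc₁⟩ :=
    (Eventually.and (Ioo_mem_nhdsLT (by norm_num : (3 / 2 : ℝ) < 2)) hlt).exists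
  exact ⟨c, by linarith [hc.1], hc.2, hc₁⟩

theorem stmt5 :
    -- the bound holds for any real `c` with `∑_{n ≥ 2} n^{-c} ≤ 1`
    (∀ c : ℝ, Summable (fun n : ℕ => ((n + 2 : ℕ) : ℝ) ^ (-c)) →
      (∑' n : ℕ, ((n + 2 : ℕ) : ℝ) ^ (-c)) ≤ 1 →
      ∀ k m : ℕ, 0 < k → 0 < m → (alpha k m : ℝ) ≤ (m : ℝ) ^ c) ∧
    -- in particular there is such a `c` in the interval `(1,2)`
    (∃ c : ℝ, 1 < c ∧ c < 2 ∧
      ∀ k m : ℕ, 0 < k → 0 < m → (alpha k m : ℝ) ≤ (m : ℝ) ^ c) := by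
  refine ⟨fun c hc hc₁ k m _ hm => alpha_le_rpow hc hc₁ k hm, ?_⟩
  obtain ⟨c, hc, hc₂, hc₁⟩ := exists_lt_two_tsum_rpow_neg_add_two_lt_one
  exact ⟨c, hc, hc₂, fun k m _ hm => alpha_le_rpow (summable_rpow_neg_add_two hc) hc₁.le k hm⟩
end

section
/- For every positive integer k and every positive integer j, (−1)^k Σ_{d ∣ j} Σ_{r=k}^{Ω(j/d)} (−1)^r α_r(j/d) = α_k(j), where the outer sum is over all positive divisors d of j. -/
/-- `Omega m` is the number of prime factors of `m` counted with multiplicity;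
note `alpha r m = 0` for `r > Omega m`. -/
def Omega (m : ℕ) : ℕ := m.primeFactorsList.length

/-!
Splitting off the first factor of an `(r + 1)`-tuple shows `∑_{d ∣ j} α_r(j / d) = α_r(j) + α_{r+1}(j)`,
the term `d = 1` contributing `α_r(j)`. Since `α_r(m) = 0` once `r > Ω(m)`, all inner sums can be
taken over one common range of `r`; exchanging the sums, the sum over `r` of
`(-1)^r (α_r(j) + α_{r+1}(j))` telescopes to `(-1)^k α_k(j)`.
-/

open Finset ArithmeticFunction
open scoped ArithmeticFunction.Omega

instance (k m : ℕ) : Finite {f : Fin k → ℕ // (∀ i, 2 ≤ f i) ∧ ∏ i, f i = m} := by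
  refine Set.Finite.to_subtype <|
    (Set.Finite.pi fun _ : Fin k => Set.finite_Iic m).subset ?_
  rintro f ⟨hf, rfl⟩ i -
  exact single_le_prod' (fun j _ => one_le_two.trans (hf j)) (mem_univ i)

lemma Omega_le_of_dvd {n m : ℕ} (h : n ∣ m) (hm : m ≠ 0) : Omega n ≤ Omega m :=
  (Nat.primeFactorsList_sublist_of_dvd h hm).length_le

lemma card_le_cardFactors_prod {ι : Type*} (s : Finset ι) {f : ι → ℕ}
    (hf : ∀ i ∈ s, 2 ≤ f i) : #s ≤ Ω (∏ i ∈ s, f i) := by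
  classical
  induction s using Finset.induction with
  | empty => simp
  | insert a s ha ih =>
    have hfa : 2 ≤ f a := hf a (mem_insert_self a s)
    have hfs : ∀ i ∈ s, 2 ≤ f i := fun i hi => hf i (mem_insert_of_mem hi)
    have hprod : ∏ i ∈ s, f i ≠ 0 := prod_ne_zero_iff.mpr fun i hi => by linarith [hfs i hi]
    rw [card_insert_of_notMem ha, prod_insert ha, cardFactors_mul (by omega) hprod]
    have : 0 < Ω (f a) := cardFactors_pos_iff_one_lt.mpr hfa
    linarith [ih hfs]

lemma alpha_eq_zero_of_Omega_lt {r m : ℕ} (h : Omega m < r) : alpha r m = 0 := by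
  rw [alpha, Nat.card_eq_zero]
  left
  refine ⟨fun ⟨f, hf, hprod⟩ => ?_⟩
  have := card_le_cardFactors_prod univ fun i _ => hf i
  rw [hprod, card_univ, Fintype.card_fin, cardFactors_apply] at this
  exact h.not_ge this

lemma mem_divisors_erase_one {d j : ℕ} (hj : j ≠ 0) :
    d ∈ j.divisors.erase 1 ↔ 2 ≤ d ∧ d ∣ j := by
  rw [mem_erase, Nat.mem_divisors]
  constructor
  · rintro ⟨hd1, hdj, -⟩
    have : d ≠ 0 := by rintro rfl; exact hj (Nat.eq_zero_of_zero_dvd hdj)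
    exact ⟨by omega, hdj⟩
  · rintro ⟨hd, hdj⟩
    exact ⟨by omega, hdj, hj⟩

lemma alpha_succ_s9 (r : ℕ) {j : ℕ} (hj : j ≠ 0) :
    alpha (r + 1) j = ∑ d ∈ j.divisors.erase 1, alpha r (j / d) := by
  simp only [alpha]
  rw [← sum_coe_sort, ← Nat.card_sigma]
  refine Nat.card_congr
    { toFun := fun f => ⟨⟨f.1 0, ?_⟩, Fin.tail f.1, ?_⟩
      invFun := fun p => ⟨Fin.cons p.1.1 p.2.1, ?_⟩
      left_inv := fun f => Subtype.ext (Fin.cons_self_tail f.1)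
      right_inv := fun _ => rfl }
  case refine_1 =>
    obtain ⟨f, hf, hprod⟩ := f
    exact (mem_divisors_erase_one hj).2
      ⟨hf 0, Dvd.intro _ ((Fin.prod_univ_succ f).symm.trans hprod)⟩
  case refine_2 =>
    obtain ⟨f, hf, hprod⟩ := f
    exact ⟨fun i => hf i.succ,
      Nat.eq_div_of_mul_eq_right (by linarith [hf 0]) ((Fin.prod_univ_succ f).symm.trans hprod)⟩
  case refine_3 =>
    obtain ⟨⟨d, hd⟩, g, hg, hprod⟩ := p
    rw [mem_divisors_erase_one hj] at hd
    refine ⟨Fin.cases hd.1 hg, ?_⟩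
    simp only [Fin.prod_univ_succ, Fin.cons_zero, Fin.cons_succ, hprod, Nat.mul_div_cancel' hd.2]

lemma sum_divisors_alpha_s9 (r : ℕ) {j : ℕ} (hj : j ≠ 0) :
    ∑ d ∈ j.divisors, alpha r (j / d) = alpha r j + alpha (r + 1) j := by
  rw [← add_sum_erase _ _ (Nat.one_mem_divisors.mpr hj), Nat.div_one, alpha_succ_s9 r hj]

lemma sum_Icc_Omega_eq_sum_Ico (c : ℕ → ℤ) (k : ℕ) {m N : ℕ} (hN : Omega m < N) :
    ∑ r ∈ Icc k (Omega m), c r * alpha r m = ∑ r ∈ Ico k N, c r * alpha r m := by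
  refine sum_subset (fun r hr => ?_) fun r hr hr' => ?_
  · simp only [mem_Icc, mem_Ico] at hr ⊢; omega
  · simp only [mem_Icc, mem_Ico, not_and, not_le] at hr hr'
    rw [alpha_eq_zero_of_Omega_lt (hr' hr.1), Nat.cast_zero, mul_zero]

theorem stmt9_general (k j : ℕ) (hj : 0 < j) :
    (-1 : ℤ) ^ k *
        ∑ d ∈ j.divisors, ∑ r ∈ Finset.Icc k (Omega (j / d)),
          (-1 : ℤ) ^ r * (alpha r (j / d) : ℤ)
      = (alpha k j : ℤ) := by
  set N := k + Omega j + 1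
  have hN : ∀ d ∈ j.divisors, Omega (j / d) < N := fun d hd => by
    have := Omega_le_of_dvd (Nat.div_dvd_of_dvd (Nat.dvd_of_mem_divisors hd)) hj.ne'
    omega
  -- the shape `f (r + 1) - f r` with `f r = (-1) ^ (r + 1) * α_r(j)` is the one `sum_Ico_sub` telescopes
  have hstep : ∀ r, ∑ d ∈ j.divisors, (-1 : ℤ) ^ r * (alpha r (j / d) : ℤ) =
      (-1) ^ (r + 1 + 1) * (alpha (r + 1) j : ℤ) - (-1) ^ (r + 1) * (alpha r j : ℤ) := by
    intro r
    rw [← mul_sum, ← Nat.cast_sum, sum_divisors_alpha_s9 r hj.ne']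
    push_cast
    ring
  rw [sum_congr rfl fun d hd =>
      sum_Icc_Omega_eq_sum_Ico (fun r => (-1) ^ r) k (hN d hd),
    sum_comm, sum_congr rfl fun r _ => hstep r,
    sum_Ico_sub (fun r => (-1 : ℤ) ^ (r + 1) * (alpha r j : ℤ)) (by omega),
    alpha_eq_zero_of_Omega_lt (by omega)]
  have hsq : (-1 : ℤ) ^ k * (-1) ^ k = 1 := by rw [← mul_pow, neg_one_mul, neg_neg, one_pow]
  linear_combination (alpha k j : ℤ) * hsq

theorem stmt9 (k j : ℕ) (hk : 0 < k) (hj : 0 < j) :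
    (-1 : ℤ) ^ k *
        ∑ d ∈ j.divisors, ∑ r ∈ Finset.Icc k (Omega (j / d)),
          (-1 : ℤ) ^ r * (alpha r (j / d) : ℤ)
      = (alpha k j : ℤ) :=
  stmt9_general k j hj
end

section
/- Let g ∈ ℂ[[t]] satisfy g² + g = t with zero constant term, and let u ∈ ℂ[[t]] satisfy u² = t² + 4t + 1 with constant term 1 (u is then a unit). In M₂(ℂ[[t]]) set S = [[0,−1],[1,0]], R = [[g, 1+t],[−1, −1−g]], and W = u^{-1}·[[−t, 2g+1],[2g+1, t]]. Then: (i) W² = I; (ii) W·S·W = S^{-1} = −S; (iii) W·R·W = R^{-1} = −I − R; (iv) the constant term of W is [[0,1],[1,0]]. Moreover W is the unique element of GL(2, ℂ[[t]]) satisfying (i)–(iv), up to the sign ambiguity: any V ∈ GL(2, ℂ[[t]]) satisfying (i), (ii), (iii) and having constant term [[0,1],[1,0]] equals W. -/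
/-!
With `A = !![-t, 2g+1; 2g+1, t]` one has `A² = (t² + 4t + 1)·I`, `A S A = -(t² + 4t + 1) S` and
`A R A = (t² + 4t + 1)(-I - R)`, all because `(2g+1)² = 4t + 1`; dividing `A` by a square root `u`
of `t² + 4t + 1` gives `W`. For uniqueness, if `V` is another involution conjugating `S` and `R`
to their inverses, then `W V` commutes with `S` and `R`, and the centraliser of these two matrices
consists of scalars because `t` is not a zero divisor. So `V = a W` with `a² = 1`, and the constant term
forces `a = 1`.
-/

open PowerSeries

theorem commute_mul_of_mul_mul_eq {M : Type*} [Monoid M] {W V x y : M} (hW : W * W = 1)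
    (hV : V * V = 1) (hWx : W * x * W = y) (hVx : V * x * V = y) : Commute (W * V) x :=
  calc W * V * x = W * (V * x * V) * V := by simp only [mul_assoc, hV, mul_one]
    _ = W * (W * x * W) * V := by rw [hVx, hWx]
    _ = x * (W * V) := by simp only [← mul_assoc, hW, one_mul]

section Algebra

variable {K A : Type*} [CommSemiring K] [Semiring A] [Algebra K A]

theorem smul_mul_mul_smul_eq {c d : K} (hcd : c * c * d = 1) {x y z : A}
    (h : x * y * x = d • z) : c • x * y * (c • x) = z := by
  rw [smul_mul_assoc, smul_mul_smul_comm, h, smul_smul, hcd, one_smul]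

theorem eq_smul_of_mul_eq_smul_one {x y : A} {a : K} (hx : x * x = 1) (h : x * y = a • 1) :
    y = a • x :=
  calc y = x * (x * y) := by rw [← mul_assoc, hx, one_mul]
    _ = a • x := by rw [h, mul_smul_comm, mul_one]

end Algebra

section ModularGenerators

variable {K : Type*} [CommRing K] {g t : K}

theorem inv_rotation :
    (!![0, -1; 1, 0] : Matrix (Fin 2) (Fin 2) K)⁻¹ = -!![0, -1; 1, 0] := by
  apply Matrix.inv_eq_right_inv
  ext i j; fin_cases i <;> fin_cases j <;> simp [Matrix.mul_apply, Fin.sum_univ_two]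

theorem inv_order_three (hg : g ^ 2 + g = t) :
    !![g, 1 + t; -1, -1 - g]⁻¹ = -1 - !![g, 1 + t; -1, -1 - g] := by
  apply Matrix.inv_eq_right_inv
  subst hg
  ext i j; fin_cases i <;> fin_cases j <;> simp [Matrix.mul_apply, Fin.sum_univ_two] <;> ring

theorem reflection_mul_self (hg : g ^ 2 + g = t) :
    !![-t, 2 * g + 1; 2 * g + 1, t] * !![-t, 2 * g + 1; 2 * g + 1, t] =
      (t ^ 2 + 4 * t + 1) • (1 : Matrix (Fin 2) (Fin 2) K) := by
  subst hg
  ext i j; fin_cases i <;> fin_cases j <;> simp [Matrix.mul_apply, Fin.sum_univ_two] <;> ring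

theorem reflection_mul_rotation_mul_reflection (hg : g ^ 2 + g = t) :
    !![-t, 2 * g + 1; 2 * g + 1, t] * !![0, -1; 1, 0] * !![-t, 2 * g + 1; 2 * g + 1, t] =
      (t ^ 2 + 4 * t + 1) • (!![0, -1; 1, 0] : Matrix (Fin 2) (Fin 2) K)⁻¹ := by
  rw [inv_rotation]
  subst hg
  ext i j; fin_cases i <;> fin_cases j <;> simp [Matrix.mul_apply, Fin.sum_univ_two] <;> ring

theorem reflection_mul_order_three_mul_reflection (hg : g ^ 2 + g = t) :
    !![-t, 2 * g + 1; 2 * g + 1, t] * !![g, 1 + t; -1, -1 - g] *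
        !![-t, 2 * g + 1; 2 * g + 1, t] =
      (t ^ 2 + 4 * t + 1) • !![g, 1 + t; -1, -1 - g]⁻¹ := by
  rw [inv_order_three hg]
  subst hg
  ext i j; fin_cases i <;> fin_cases j <;> simp [Matrix.mul_apply, Fin.sum_univ_two] <;> ring

theorem eq_smul_one_of_commute_rotation_of_commute_order_three [NoZeroDivisors K] (ht : t ≠ 0)
    {D : Matrix (Fin 2) (Fin 2) K} (hS : Commute D !![0, -1; 1, 0])
    (hR : Commute D !![g, 1 + t; -1, -1 - g]) : D = D 0 0 • 1 := by
  have hS00 := congrFun₂ hS.eq 0 0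
  have hS01 := congrFun₂ hS.eq 0 1
  have hR00 := congrFun₂ hR.eq 0 0
  simp only [Fin.isValue, Matrix.mul_apply, Matrix.of_apply, Matrix.cons_val', Matrix.cons_val_zero,
    Matrix.cons_val_fin_one, Fin.sum_univ_two, mul_zero, Matrix.cons_val_one, mul_one, zero_add,
    zero_mul, neg_mul, one_mul, mul_neg, add_zero, neg_inj] at hS00 hS01 hR00
  have h01 : D 0 1 = 0 := by
    refine (mul_eq_zero.mp ?_).resolve_left ht
    linear_combination hR00 + (1 + t) * hS00
  have h10 : D 1 0 = 0 := by linear_combination hS00 - h01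
  ext i j; fin_cases i <;> fin_cases j <;> simp [h01, h10, hS01]

end ModularGenerators

theorem PowerSeries.eq_one_of_mul_self_eq_one {R : Type*} [CommRing R] [IsDomain R]
    (hR : ringChar R ≠ 2) {a : R⟦X⟧} (ha : a * a = 1) (ha0 : constantCoeff a = 1) : a = 1 := by
  refine (mul_self_eq_one_iff.mp ha).resolve_right fun h => hR ?_
  rw [h, map_neg, map_one] at ha0
  exact neg_one_eq_one_iff.mp ha0

theorem stmt15 (g u : PowerSeries ℂ)
    (hg : g ^ 2 + g = PowerSeries.X)
    (hg0 : PowerSeries.constantCoeff (R := ℂ) g = 0)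
    (hu : u ^ 2 = PowerSeries.X ^ 2 + 4 * PowerSeries.X + 1)
    (hu0 : PowerSeries.constantCoeff (R := ℂ) u = 1) :
    let S : Matrix (Fin 2) (Fin 2) (PowerSeries ℂ) := !![0, -1; 1, 0]
    let R : Matrix (Fin 2) (Fin 2) (PowerSeries ℂ) :=
      !![g, 1 + PowerSeries.X; -1, -1 - g]
    let W : Matrix (Fin 2) (Fin 2) (PowerSeries ℂ) :=
      u⁻¹ • !![-PowerSeries.X, 2 * g + 1; 2 * g + 1, PowerSeries.X]
    -- (i)–(iv)
    W ^ 2 = 1 ∧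
    (W * S * W = S⁻¹ ∧ S⁻¹ = -S) ∧
    (W * R * W = R⁻¹ ∧ R⁻¹ = -1 - R) ∧
    W.map (PowerSeries.constantCoeff (R := ℂ)) = !![0, 1; 1, 0] ∧
    -- uniqueness: any invertible V satisfying (i)–(iv) equals W
    (∀ V : Matrix (Fin 2) (Fin 2) (PowerSeries ℂ), IsUnit V →
      V ^ 2 = 1 → V * S * V = S⁻¹ → V * R * V = R⁻¹ →
      V.map (PowerSeries.constantCoeff (R := ℂ)) = !![0, 1; 1, 0] → V = W) := by
  intro S R W
  have hscale : u⁻¹ * u⁻¹ * (X ^ 2 + 4 * X + 1) = 1 := by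
    rw [← hu]
    linear_combination (u⁻¹ * u + 1) * PowerSeries.inv_mul_cancel u (by simp [hu0])
  have hWW : W * W = 1 := by
    rw [smul_mul_smul_comm, reflection_mul_self hg, smul_smul, hscale, one_smul]
  have hWSW : W * S * W = S⁻¹ :=
    smul_mul_mul_smul_eq hscale (reflection_mul_rotation_mul_reflection hg)
  have hWRW : W * R * W = R⁻¹ :=
    smul_mul_mul_smul_eq hscale (reflection_mul_order_three_mul_reflection hg)
  have hW0 : W.map constantCoeff = !![0, 1; 1, 0] := by
    ext i j; fin_cases i <;> fin_cases j <;> simp [W, hg0, hu0]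
  refine ⟨sq W ▸ hWW, ⟨hWSW, inv_rotation⟩, ⟨hWRW, inv_order_three hg⟩, hW0, ?_⟩
  intro V _ hV2 hVSV hVRV hV0
  rw [sq] at hV2
  have hV : V = (W * V) 0 0 • W := eq_smul_of_mul_eq_smul_one hWW <|
    eq_smul_one_of_commute_rotation_of_commute_order_three X_ne_zero
      (commute_mul_of_mul_mul_eq hWW hV2 hWSW hVSV) (commute_mul_of_mul_mul_eq hWW hV2 hWRW hVRV)
  set a := (W * V) 0 0
  have ha : a * a = 1 := by
    rw [hV, smul_mul_smul_comm, hWW] at hV2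
    simpa using congrFun₂ hV2 0 0
  have ha0 : constantCoeff a = 1 := by
    rw [hV, Matrix.map_smul' _ _ _ (map_mul _), hW0] at hV0
    simpa using congrFun₂ hV0 0 1
  rw [hV, eq_one_of_mul_self_eq_one (by simp [ringChar.eq_zero]) ha ha0, one_smul]
end
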